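/- Let τ be a nop-free Boolean type of net with swap ∈ τ and τ ∩ save ≠ ∅ (where save = {nop,set,used,res,free}), let φ be an instance of cubic monotone 1-in-3 3SAT, and let A_φ be the bi-directed transition system associated to φ as defined in the context. If φ has a one-in-three model, then A_φ has the τ-SSP. -/

import Mathlib

/-!  Common framework: Boolean types of nets, transition systems (as labeled
edge relations), τ-regions, state separation. -/

inductive Interaction : Type
  | nop | inp | out | res | set | swap | used | free
  deriving DecidableEq

/-- The partial function on `{0,1}` (encoded as `Bool`, `false = 0`, `true = 1`)
defined by a Boolean interaction. -/
def Interaction.eval : Interaction → Bool → Option Bool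
  | .nop, x => some x
  | .inp, true => some false
  | .inp, false => none
  | .out, false => some true
  | .out, true => none
  | .res, _ => some false
  | .set, _ => some true
  | .swap, x => some (!x)
  | .used, true => some true
  | .used, false => none
  | .free, false => some false
  | .free, true => none

/-- `(sup, sig)` is a `τ`-region of the transition system given by the labeled
edge relation `edge`. -/
def IsRegion {S E : Type} (edge : S → E → S → Prop) (τ : Set Interaction)
    (sup : S → Bool) (sig : E → Interaction) : Prop :=
  (∀ e, sig e ∈ τ) ∧
    ∀ s e s', edge s e s' → (sig e).eval (sup s) = some (sup s')

/-- The `τ`-state separation property: every pair of distinct states (SSP atom)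
is solved by some `τ`-region. -/
def HasSSP {S E : Type} (edge : S → E → S → Prop) (τ : Set Interaction) : Prop :=
  ∀ s s' : S, s ≠ s' → ∃ sup sig, IsRegion edge τ sup sig ∧ sup s ≠ sup s'

def Deterministic {S E : Type} (edge : S → E → S → Prop) : Prop :=
  ∀ s e s₁ s₂, edge s e s₁ → edge s e s₂ → s₁ = s₂

inductive Reachable {S E : Type} (edge : S → E → S → Prop) : S → S → Prop
  | refl (s : S) : Reachable edge s s
  | tail {s t u : S} {e : E} : Reachable edge s t → edge t e u → Reachable edge s u

/-- `ι` is an initial state from which every state is reachable. -/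
def Initialized {S E : Type} (edge : S → E → S → Prop) (ι : S) : Prop :=
  ∀ s, Reachable edge ι s

def LoopFree {S E : Type} (edge : S → E → S → Prop) : Prop :=
  ∀ s e s', edge s e s' → s ≠ s'

def BiDirected {S E : Type} (edge : S → E → S → Prop) : Prop :=
  LoopFree edge ∧ ∀ s e s', edge s e s' → edge s' e s

/-- A region is normalized (for a `nop`-equipped type): no event has signature
`used` or `free`, and every event with signature in `{inp,out,res,set,swap}`
has an edge on which the support changes. -/
def Normalized {S E : Type} (edge : S → E → S → Prop)
    (sup : S → Bool) (sig : E → Interaction) : Prop :=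
  ∀ e, (sig e ≠ Interaction.used ∧ sig e ≠ Interaction.free) ∧
    ((sig e = Interaction.inp ∨ sig e = Interaction.out ∨ sig e = Interaction.res ∨
        sig e = Interaction.set ∨ sig e = Interaction.swap) →
      ∃ s s', edge s e s' ∧ sup s ≠ sup s')

/-- save = save₁ ∪ save₀ = {nop,set,used} ∪ {nop,res,free}. -/
def saveSet : Set Interaction :=
  {Interaction.nop, Interaction.set, Interaction.used, Interaction.res, Interaction.free}

/-- An instance of cubic monotone 1-in-3 3SAT: `m` clauses
`ζ i = {X (c0 i), X (c1 i), X (c2 i)}` over the `m` variables `Fin m`; each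
clause consists of three distinct variables and every variable occurs in
exactly three clauses. -/
def CubicMonotone {m : ℕ} (c0 c1 c2 : Fin m → Fin m) : Prop :=
  (∀ i, c0 i ≠ c1 i ∧ c0 i ≠ c2 i ∧ c1 i ≠ c2 i) ∧
    ∀ x : Fin m,
      (Finset.univ.filter fun i => c0 i = x ∨ c1 i = x ∨ c2 i = x).card = 3

/-- `M` is a one-in-three model: it contains exactly one variable of every
clause. -/
def OneInThreeModel {m : ℕ} (c0 c1 c2 : Fin m → Fin m) (M : Set (Fin m)) : Prop :=
  ∀ i : Fin m,
    (c0 i ∈ M ∧ c1 i ∉ M ∧ c2 i ∉ M) ∨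
      (c0 i ∉ M ∧ c1 i ∈ M ∧ c2 i ∉ M) ∨
      (c0 i ∉ M ∧ c1 i ∉ M ∧ c2 i ∈ M)

/-- The states of the bi-directed TS `A_φ` of the nop-free reduction:
the initial state `ι`; the connector states `⊥_j` (`j < 2m`) and `⊤_j`
(`j < 14m`); the gadget states of `G_i, F_i, G_i', F_i'` (`i < 7m`) and of
`T_{i,0}, T_{i,1}, T_{i,0}', T_{i,1}'` (`i < m`). -/
inductive BState (m : ℕ) : Type
  | iota : BState m
  | bot (j : Fin (2 * m)) : BState m
  | top (j : Fin (14 * m)) : BState m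
  | g (i : Fin (7 * m)) (j : Fin 5) : BState m
  | f (i : Fin (7 * m)) (j : Fin 5) : BState m
  | g' (i : Fin (7 * m)) (j : Fin 5) : BState m
  | f' (i : Fin (7 * m)) (j : Fin 5) : BState m
  | t0 (i : Fin m) (j : Fin 12) : BState m
  | t1 (i : Fin m) (j : Fin 4) : BState m
  | t0' (i : Fin m) (j : Fin 12) : BState m
  | t1' (i : Fin m) (j : Fin 4) : BState m

/-- The events of `A_φ`: `k₀, k₁`, `v_i, w_i, v_i', w_i'` (`i < 7m`), the
variables `X_x, X_x'` (`x < m`) and the connector events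
`⊕_j, ⊗_j, ⊙_j, ⊙_j', ⊖_j, ⊖_j'`. -/
inductive BEvent (m : ℕ) : Type
  | k0 : BEvent m
  | k1 : BEvent m
  | v (i : Fin (7 * m)) : BEvent m
  | w (i : Fin (7 * m)) : BEvent m
  | v' (i : Fin (7 * m)) : BEvent m
  | w' (i : Fin (7 * m)) : BEvent m
  | X (x : Fin m) : BEvent m
  | X' (x : Fin m) : BEvent m
  | oplus (j : Fin (2 * m)) : BEvent m
  | otimes (j : Fin (14 * m)) : BEvent m
  | odot (j : Fin (14 * m)) : BEvent m
  | odot' (j : Fin (14 * m)) : BEvent m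
  | ominus (j : Fin (2 * m)) : BEvent m
  | ominus' (j : Fin (2 * m)) : BEvent m

/-- `v_{7i+j}` for a clause index `i < m` and `j < 7`. -/
def vIdx {m : ℕ} (i : Fin m) (j : Fin 7) : Fin (7 * m) :=
  ⟨7 * i.val + j.val, by have := i.isLt; have := j.isLt; omega⟩

/-- The predecessor of `⊥_j` on the path `ι ⊕₀ ⊥₀ ⊕₁ ⊥₁ …`. -/
def prevBot {m : ℕ} (j : Fin (2 * m)) : BState m :=
  if j.val = 0 then BState.iota
  else BState.bot ⟨j.val - 1, by have := j.isLt; omega⟩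

/-- The predecessor of `⊤_j` on the path `ι ⊗₀ ⊤₀ ⊗₁ ⊤₁ …`. -/
def prevTop {m : ℕ} (j : Fin (14 * m)) : BState m :=
  if j.val = 0 then BState.iota
  else BState.top ⟨j.val - 1, by have := j.isLt; omega⟩

/-- The `j`-th gadget starting state `s_j` of the sequence
`g_{0,0}, f_{0,0}, g_{1,0}, f_{1,0}, …, g_{7m-1,0}, f_{7m-1,0}`. -/
def gadgetStart {m : ℕ} (j : Fin (14 * m)) : BState m :=
  if j.val % 2 = 0 then BState.g ⟨j.val / 2, by have := j.isLt; omega⟩ 0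
  else BState.f ⟨j.val / 2, by have := j.isLt; omega⟩ 0

/-- The `j`-th primed gadget starting state `s_j'`. -/
def gadgetStart' {m : ℕ} (j : Fin (14 * m)) : BState m :=
  if j.val % 2 = 0 then BState.g' ⟨j.val / 2, by have := j.isLt; omega⟩ 0
  else BState.f' ⟨j.val / 2, by have := j.isLt; omega⟩ 0

/-- One direction of every bi-directed edge of `A_φ`. -/
inductive BEdge0 {m : ℕ} (c0 c1 c2 : Fin m → Fin m) :
    BState m → BEvent m → BState m → Prop
  -- G_i = g_{i,0} v_i g_{i,1} w_i g_{i,2} k₀ g_{i,3} k₁ g_{i,4}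
  | gv (i : Fin (7 * m)) : BEdge0 c0 c1 c2 (.g i 0) (.v i) (.g i 1)
  | gw (i : Fin (7 * m)) : BEdge0 c0 c1 c2 (.g i 1) (.w i) (.g i 2)
  | gk0 (i : Fin (7 * m)) : BEdge0 c0 c1 c2 (.g i 2) .k0 (.g i 3)
  | gk1 (i : Fin (7 * m)) : BEdge0 c0 c1 c2 (.g i 3) .k1 (.g i 4)
  -- F_i = f_{i,0} v_i f_{i,1} w_i f_{i,2} k₁ f_{i,3} k₀ f_{i,4}
  | fv (i : Fin (7 * m)) : BEdge0 c0 c1 c2 (.f i 0) (.v i) (.f i 1)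
  | fw (i : Fin (7 * m)) : BEdge0 c0 c1 c2 (.f i 1) (.w i) (.f i 2)
  | fk1 (i : Fin (7 * m)) : BEdge0 c0 c1 c2 (.f i 2) .k1 (.f i 3)
  | fk0 (i : Fin (7 * m)) : BEdge0 c0 c1 c2 (.f i 3) .k0 (.f i 4)
  -- G_i' = g_{i,0}' v_i' g_{i,1}' w_i' g_{i,2}' k₁ g_{i,3}' k₀ g_{i,4}'
  | g'v (i : Fin (7 * m)) : BEdge0 c0 c1 c2 (.g' i 0) (.v' i) (.g' i 1)
  | g'w (i : Fin (7 * m)) : BEdge0 c0 c1 c2 (.g' i 1) (.w' i) (.g' i 2)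
  | g'k1 (i : Fin (7 * m)) : BEdge0 c0 c1 c2 (.g' i 2) .k1 (.g' i 3)
  | g'k0 (i : Fin (7 * m)) : BEdge0 c0 c1 c2 (.g' i 3) .k0 (.g' i 4)
  -- F_i' = f_{i,0}' v_i' f_{i,1}' w_i' f_{i,2}' k₀ f_{i,3}' k₁ f_{i,4}'
  | f'v (i : Fin (7 * m)) : BEdge0 c0 c1 c2 (.f' i 0) (.v' i) (.f' i 1)
  | f'w (i : Fin (7 * m)) : BEdge0 c0 c1 c2 (.f' i 1) (.w' i) (.f' i 2)
  | f'k0 (i : Fin (7 * m)) : BEdge0 c0 c1 c2 (.f' i 2) .k0 (.f' i 3)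
  | f'k1 (i : Fin (7 * m)) : BEdge0 c0 c1 c2 (.f' i 3) .k1 (.f' i 4)
  -- T_{i,0}
  | t0k0a (i : Fin m) : BEdge0 c0 c1 c2 (.t0 i 0) .k0 (.t0 i 1)
  | t0v0 (i : Fin m) : BEdge0 c0 c1 c2 (.t0 i 1) (.v (vIdx i 0)) (.t0 i 2)
  | t0v1 (i : Fin m) : BEdge0 c0 c1 c2 (.t0 i 2) (.v (vIdx i 1)) (.t0 i 3)
  | t0X0 (i : Fin m) : BEdge0 c0 c1 c2 (.t0 i 3) (.X (c0 i)) (.t0 i 4)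
  | t0v2 (i : Fin m) : BEdge0 c0 c1 c2 (.t0 i 4) (.v (vIdx i 2)) (.t0 i 5)
  | t0X1 (i : Fin m) : BEdge0 c0 c1 c2 (.t0 i 5) (.X (c1 i)) (.t0 i 6)
  | t0v3 (i : Fin m) : BEdge0 c0 c1 c2 (.t0 i 6) (.v (vIdx i 3)) (.t0 i 7)
  | t0X2 (i : Fin m) : BEdge0 c0 c1 c2 (.t0 i 7) (.X (c2 i)) (.t0 i 8)
  | t0v4 (i : Fin m) : BEdge0 c0 c1 c2 (.t0 i 8) (.v (vIdx i 4)) (.t0 i 9)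
  | t0v5 (i : Fin m) : BEdge0 c0 c1 c2 (.t0 i 9) (.v (vIdx i 5)) (.t0 i 10)
  | t0k0b (i : Fin m) : BEdge0 c0 c1 c2 (.t0 i 10) .k0 (.t0 i 11)
  -- T_{i,1}
  | t1X0 (i : Fin m) : BEdge0 c0 c1 c2 (.t1 i 0) (.X (c0 i)) (.t1 i 1)
  | t1v6 (i : Fin m) : BEdge0 c0 c1 c2 (.t1 i 1) (.v (vIdx i 6)) (.t1 i 2)
  | t1X2 (i : Fin m) : BEdge0 c0 c1 c2 (.t1 i 2) (.X (c2 i)) (.t1 i 3)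
  -- T_{i,0}'
  | t0'k1a (i : Fin m) : BEdge0 c0 c1 c2 (.t0' i 0) .k1 (.t0' i 1)
  | t0'v0 (i : Fin m) : BEdge0 c0 c1 c2 (.t0' i 1) (.v' (vIdx i 0)) (.t0' i 2)
  | t0'v1 (i : Fin m) : BEdge0 c0 c1 c2 (.t0' i 2) (.v' (vIdx i 1)) (.t0' i 3)
  | t0'X0 (i : Fin m) : BEdge0 c0 c1 c2 (.t0' i 3) (.X' (c0 i)) (.t0' i 4)
  | t0'v2 (i : Fin m) : BEdge0 c0 c1 c2 (.t0' i 4) (.v' (vIdx i 2)) (.t0' i 5)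
  | t0'X1 (i : Fin m) : BEdge0 c0 c1 c2 (.t0' i 5) (.X' (c1 i)) (.t0' i 6)
  | t0'v3 (i : Fin m) : BEdge0 c0 c1 c2 (.t0' i 6) (.v' (vIdx i 3)) (.t0' i 7)
  | t0'X2 (i : Fin m) : BEdge0 c0 c1 c2 (.t0' i 7) (.X' (c2 i)) (.t0' i 8)
  | t0'v4 (i : Fin m) : BEdge0 c0 c1 c2 (.t0' i 8) (.v' (vIdx i 4)) (.t0' i 9)
  | t0'v5 (i : Fin m) : BEdge0 c0 c1 c2 (.t0' i 9) (.v' (vIdx i 5)) (.t0' i 10)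
  | t0'k1b (i : Fin m) : BEdge0 c0 c1 c2 (.t0' i 10) .k1 (.t0' i 11)
  -- T_{i,1}'
  | t1'X0 (i : Fin m) : BEdge0 c0 c1 c2 (.t1' i 0) (.X' (c0 i)) (.t1' i 1)
  | t1'v6 (i : Fin m) : BEdge0 c0 c1 c2 (.t1' i 1) (.v' (vIdx i 6)) (.t1' i 2)
  | t1'X2 (i : Fin m) : BEdge0 c0 c1 c2 (.t1' i 2) (.X' (c2 i)) (.t1' i 3)
  -- connector paths ι ⊕₀ ⊥₀ ⊕₁ ⊥₁ … and ι ⊗₀ ⊤₀ ⊗₁ ⊤₁ …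
  | oplus (j : Fin (2 * m)) : BEdge0 c0 c1 c2 (prevBot j) (.oplus j) (.bot j)
  | otimes (j : Fin (14 * m)) : BEdge0 c0 c1 c2 (prevTop j) (.otimes j) (.top j)
  -- ⊤_j ⊙_j s_j and ⊤_j ⊙_j' s_j'
  | odot (j : Fin (14 * m)) : BEdge0 c0 c1 c2 (.top j) (.odot j) (gadgetStart j)
  | odot' (j : Fin (14 * m)) : BEdge0 c0 c1 c2 (.top j) (.odot' j) (gadgetStart' j)
  -- ⊥_{2i} ⊖_{2i} t_{i,0,0}, ⊥_{2i+1} ⊖_{2i+1} t_{i,1,0} and primed versions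
  | ominus0 (i : Fin m) :
      BEdge0 c0 c1 c2 (.bot ⟨2 * i.val, by have := i.isLt; omega⟩)
        (.ominus ⟨2 * i.val, by have := i.isLt; omega⟩) (.t0 i 0)
  | ominus1 (i : Fin m) :
      BEdge0 c0 c1 c2 (.bot ⟨2 * i.val + 1, by have := i.isLt; omega⟩)
        (.ominus ⟨2 * i.val + 1, by have := i.isLt; omega⟩) (.t1 i 0)
  | ominus0' (i : Fin m) :
      BEdge0 c0 c1 c2 (.bot ⟨2 * i.val, by have := i.isLt; omega⟩)
        (.ominus' ⟨2 * i.val, by have := i.isLt; omega⟩) (.t0' i 0)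
  | ominus1' (i : Fin m) :
      BEdge0 c0 c1 c2 (.bot ⟨2 * i.val + 1, by have := i.isLt; omega⟩)
        (.ominus' ⟨2 * i.val + 1, by have := i.isLt; omega⟩) (.t1' i 0)

/-- The (bi-directed) edge relation of `A_φ`: the symmetric closure of the
listed edges. -/
def BEdge {m : ℕ} (c0 c1 c2 : Fin m → Fin m) :
    BState m → BEvent m → BState m → Prop :=
  fun s e s' => BEdge0 c0 c1 c2 s e s' ∨ BEdge0 c0 c1 c2 s' e s

/-!
All regions needed have signatures in `{swap, σ}` for one `σ ∈ τ ∩ save`; since `σ` fixes some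
`b`, such a region amounts to a support together with a set of swapping events such that every
other event only joins states of support `0` (up to complementing by `b`).

Connector states are separated by their indicators, states of different gadgets by the all-swap
region whose phase is chosen independently on each gadget, and states of one gadget by regions in
which all `w_i`, or all `v_i` with `i` in one residue class mod 7, or `k₁` are inert. Making `k₁`
inert is consistent on `T'_{i,0}` exactly because a one-in-three model makes one `X'`-edge between
its two `k₁`-edges inert. The primed half of `A_φ` is reduced to the unprimed one by the
automorphism exchanging the two halves and `k₀` with `k₁`.
-/

deriving instance DecidableEq for BState

section SwapLabelling

variable {S E S' E' : Type}

/-- Events marked by `W` swap the support; unmarked events only join states of support `0`, so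
that after complementing the support if necessary they can carry any `save` interaction. -/
def IsSwapLabelling (edge : S → E → S → Prop) (sup : S → Bool) (W : E → Bool) : Prop :=
  ∀ s e s', edge s e s' → sup s' = (W e && !sup s) ∧ sup s = (W e && !sup s')

def SwapSeparable (edge : S → E → S → Prop) (s t : S) : Prop :=
  ∃ sup W, IsSwapLabelling edge sup W ∧ sup s ≠ sup t

theorem Interaction.exists_eval_eq_self_of_mem_saveSet {σ : Interaction} (hσ : σ ∈ saveSet) :
    ∃ b, σ.eval b = some b := by
  rcases hσ with rfl | rfl | rfl | rfl | rfl
  exacts [⟨false, rfl⟩, ⟨true, rfl⟩, ⟨true, rfl⟩, ⟨false, rfl⟩, ⟨false, rfl⟩]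

theorem IsSwapLabelling.exists_isRegion {edge : S → E → S → Prop} {τ : Set Interaction}
    (hswap : Interaction.swap ∈ τ) {σ : Interaction} (hσ : σ ∈ τ ∩ saveSet)
    {sup : S → Bool} {W : E → Bool} (h : IsSwapLabelling edge sup W) :
    ∃ b, IsRegion edge τ (fun s => sup s ^^ b) (fun e => if W e then .swap else σ) := by
  obtain ⟨b, hb⟩ := Interaction.exists_eval_eq_self_of_mem_saveSet hσ.2
  refine ⟨b, fun e => ?_, fun s e s' hs => ?_⟩
  · dsimp only
    split
    exacts [hswap, hσ.1]
  · obtain ⟨hs', hs⟩ := h s e s' hs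
    cases hW : W e
    · simp_all
    · cases sup s <;> cases b <;> simp_all [Interaction.eval]

theorem hasSSP_of_swapSeparable {edge : S → E → S → Prop} {τ : Set Interaction}
    (hswap : Interaction.swap ∈ τ) (hsave : (τ ∩ saveSet).Nonempty)
    (h : ∀ s t, s ≠ t → SwapSeparable edge s t) : HasSSP edge τ := by
  intro s t hst
  obtain ⟨σ, hσ⟩ := hsave
  obtain ⟨sup, W, hW, hne⟩ := h s t hst
  obtain ⟨b, hb⟩ := hW.exists_isRegion hswap hσ
  exact ⟨_, _, hb, by simpa using hne⟩

theorem IsSwapLabelling.symm_closure {edge : S → E → S → Prop} {sup : S → Bool} {W : E → Bool}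
    (h : IsSwapLabelling edge sup W) :
    IsSwapLabelling (fun s e s' => edge s e s' ∨ edge s' e s) sup W :=
  fun s e s' hs => hs.elim (h s e s') fun hs => (h s' e s hs).symm

theorem SwapSeparable.symm {edge : S → E → S → Prop} {s t : S} (h : SwapSeparable edge s t) :
    SwapSeparable edge t s :=
  let ⟨sup, W, hW, hne⟩ := h
  ⟨sup, W, hW, hne.symm⟩

theorem SwapSeparable.comap {edge : S → E → S → Prop} {edge' : S' → E' → S' → Prop}
    (f : S' → S) (g : E' → E) (hf : ∀ s e s', edge' s e s' → edge (f s) (g e) (f s'))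
    {s t : S'} (h : SwapSeparable edge (f s) (f t)) : SwapSeparable edge' s t :=
  let ⟨sup, W, hW, hne⟩ := h
  ⟨sup ∘ f, W ∘ g, fun s e s' hs => hW _ _ _ (hf s e s' hs), hne⟩

end SwapLabelling

section Aphi

variable {m : ℕ} {c0 c1 c2 : Fin m → Fin m}

namespace BState

def isConnector : BState m → Bool
  | iota | bot _ | top _ => true
  | _ => false

/-- A gadget is represented by its starting state, a connector state by itself. -/
def gadget : BState m → BState m
  | g i _ => g i 0 | f i _ => f i 0 | g' i _ => g' i 0 | f' i _ => f' i 0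
  | t0 i _ => t0 i 0 | t1 i _ => t1 i 0 | t0' i _ => t0' i 0 | t1' i _ => t1' i 0
  | s => s

def parity : BState m → Bool
  | g _ j | f _ j | g' _ j | f' _ j => j.val % 2 == 1
  | t0 _ j | t1 _ j | t0' _ j | t1' _ j => j.val % 2 == 1
  | _ => false

def swapPrime : BState m → BState m
  | g i j => g' i j | g' i j => g i j | f i j => f' i j | f' i j => f i j
  | t0 i j => t0' i j | t0' i j => t0 i j | t1 i j => t1' i j | t1' i j => t1 i j
  | s => s

end BState

namespace BEvent

def swapPrime : BEvent m → BEvent m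
  | k0 => k1 | k1 => k0
  | v i => v' i | v' i => v i | w i => w' i | w' i => w i | X x => X' x | X' x => X x
  | odot j => odot' j | odot' j => odot j | ominus j => ominus' j | ominus' j => ominus j
  | e => e

def isGadgetEvent : BEvent m → Bool
  | oplus _ | otimes _ | odot _ | odot' _ | ominus _ | ominus' _ => false
  | _ => true

end BEvent

theorem prevBot_swapPrime (j : Fin (2 * m)) : (prevBot j).swapPrime = prevBot j := by
  unfold prevBot; split <;> rfl

theorem prevTop_swapPrime (j : Fin (14 * m)) : (prevTop j).swapPrime = prevTop j := by
  unfold prevTop; split <;> rfl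

theorem gadgetStart_swapPrime (j : Fin (14 * m)) : (gadgetStart j).swapPrime = gadgetStart' j := by
  unfold gadgetStart gadgetStart'; split <;> rfl

theorem gadgetStart'_swapPrime (j : Fin (14 * m)) : (gadgetStart' j).swapPrime = gadgetStart j := by
  unfold gadgetStart gadgetStart'; split <;> rfl

theorem BEdge0.swapPrime {s s' : BState m} {e : BEvent m} (h : BEdge0 c0 c1 c2 s e s') :
    BEdge0 c0 c1 c2 s.swapPrime e.swapPrime s'.swapPrime := by
  cases h <;>
    (try simp only [prevBot_swapPrime, prevTop_swapPrime, gadgetStart_swapPrime,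
      gadgetStart'_swapPrime]) <;>
    constructor

theorem SwapSeparable.of_swapPrime {s t : BState m}
    (h : SwapSeparable (BEdge c0 c1 c2) s.swapPrime t.swapPrime) :
    SwapSeparable (BEdge c0 c1 c2) s t :=
  h.comap _ BEvent.swapPrime fun _ _ _ hs => hs.imp BEdge0.swapPrime BEdge0.swapPrime

def GadgetEdge (c0 c1 c2 : Fin m → Fin m) (s : BState m) (e : BEvent m) (s' : BState m) : Prop :=
  BEdge0 c0 c1 c2 s e s' ∧ e.isGadgetEvent

theorem GadgetEdge.flip {s s' : BState m} {e : BEvent m} (h : GadgetEdge c0 c1 c2 s e s') :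
    s.isConnector = false ∧ s'.isConnector = false ∧ s'.gadget = s.gadget ∧
      s'.parity = !s.parity := by
  obtain ⟨h, hg⟩ := h
  cases h <;> cases hg <;> exact ⟨rfl, rfl, rfl, rfl⟩

def ominusTarget (j : Fin (2 * m)) : BState m :=
  if j.val % 2 = 0 then .t0 ⟨j.val / 2, by omega⟩ 0 else .t1 ⟨j.val / 2, by omega⟩ 0

def ominusTarget' (j : Fin (2 * m)) : BState m :=
  if j.val % 2 = 0 then .t0' ⟨j.val / 2, by omega⟩ 0 else .t1' ⟨j.val / 2, by omega⟩ 0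

theorem ominusTarget_even (i : Fin m) {h} : ominusTarget ⟨2 * i.val, h⟩ = .t0 i 0 := by
  simp [ominusTarget]

theorem ominusTarget_odd (i : Fin m) {h} : ominusTarget ⟨2 * i.val + 1, h⟩ = .t1 i 0 := by
  simp only [ominusTarget, Nat.mul_add_mod_self_left, Nat.mod_succ, one_ne_zero, ↓reduceIte,
    BState.t1.injEq, Fin.ext_iff, and_true]
  omega

theorem ominusTarget'_even (i : Fin m) {h} : ominusTarget' ⟨2 * i.val, h⟩ = .t0' i 0 := by
  simp [ominusTarget']

theorem ominusTarget'_odd (i : Fin m) {h} : ominusTarget' ⟨2 * i.val + 1, h⟩ = .t1' i 0 := by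
  simp only [ominusTarget', Nat.mul_add_mod_self_left, Nat.mod_succ, one_ne_zero, ↓reduceIte,
    BState.t1'.injEq, Fin.ext_iff, and_true]
  omega

theorem isConnector_prevBot (j : Fin (2 * m)) : (prevBot j).isConnector := by
  unfold prevBot; split <;> rfl

theorem isConnector_prevTop (j : Fin (14 * m)) : (prevTop j).isConnector := by
  unfold prevTop; split <;> rfl

/-- Connector paths are inert; each attaching event swaps exactly when it enters support `1`. -/
def extendLabelling (sup : BState m → Bool) (W : BEvent m → Bool) : BEvent m → Bool
  | .oplus _ | .otimes _ => false
  | .odot j => sup (gadgetStart j)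
  | .odot' j => sup (gadgetStart' j)
  | .ominus j => sup (ominusTarget j)
  | .ominus' j => sup (ominusTarget' j)
  | e => W e

theorem extendLabelling_of_isGadgetEvent (sup : BState m → Bool) (W : BEvent m → Bool)
    {e : BEvent m} (he : e.isGadgetEvent) : extendLabelling sup W e = W e := by
  cases e <;> first | rfl | cases he

theorem isSwapLabelling_extendLabelling {sup : BState m → Bool} {W : BEvent m → Bool}
    (hconn : ∀ s : BState m, s.isConnector → sup s = false)
    (hgad : IsSwapLabelling (GadgetEdge c0 c1 c2) sup W) :
    IsSwapLabelling (BEdge c0 c1 c2) sup (extendLabelling sup W) := by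
  have hbot (j : Fin (2 * m)) : sup (.bot j) = false := hconn _ rfl
  have htop (j : Fin (14 * m)) : sup (.top j) = false := hconn _ rfl
  have hprevBot (j : Fin (2 * m)) : sup (prevBot j) = false := hconn _ (isConnector_prevBot j)
  have hprevTop (j : Fin (14 * m)) : sup (prevTop j) = false := hconn _ (isConnector_prevTop j)
  refine IsSwapLabelling.symm_closure fun s e s' h => ?_
  cases he : e.isGadgetEvent
  · cases h <;> cases he <;>
      simp [extendLabelling, hbot, htop, hprevBot, hprevTop, ominusTarget_even, ominusTarget_odd,
        ominusTarget'_even, ominusTarget'_odd]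
  · rw [extendLabelling_of_isGadgetEvent sup W he]
    exact hgad s e s' ⟨h, he⟩

theorem prevBot_ne_bot (j : Fin (2 * m)) : prevBot j ≠ .bot j := by
  unfold prevBot; split
  · simp
  · simp only [ne_eq, BState.bot.injEq, Fin.ext_iff]; omega

theorem prevTop_ne_top (j : Fin (14 * m)) : prevTop j ≠ .top j := by
  unfold prevTop; split
  · simp
  · simp only [ne_eq, BState.top.injEq, Fin.ext_iff]; omega

theorem isConnector_gadgetStart (j : Fin (14 * m)) : (gadgetStart j).isConnector = false := by
  unfold gadgetStart; split <;> rfl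

theorem isConnector_gadgetStart' (j : Fin (14 * m)) : (gadgetStart' j).isConnector = false := by
  unfold gadgetStart'; split <;> rfl

def connectorW (c : BState m) : BEvent m → Bool
  | .oplus j => decide (prevBot j = c) || decide (.bot j = c)
  | .otimes j => decide (prevTop j = c) || decide (.top j = c)
  | .odot j | .odot' j => decide (.top j = c)
  | .ominus j | .ominus' j => decide (.bot j = c)
  | _ => false

theorem isSwapLabelling_connectorIndicator {c : BState m} (hc : c.isConnector) :
    IsSwapLabelling (BEdge c0 c1 c2) (fun s => decide (s = c)) (connectorW c) := by
  have hne {s : BState m} (hs : s.isConnector = false) : s ≠ c := by rintro rfl; simp_all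
  refine IsSwapLabelling.symm_closure fun s e s' h => ?_
  suffices ¬(s = c ∧ s' = c) ∧ connectorW c e = (decide (s = c) || decide (s' = c)) by
    obtain ⟨hboth, hW⟩ := this
    rw [hW]
    by_cases s = c <;> by_cases s' = c <;> simp_all
  cases he : e.isGadgetEvent
  · cases h
    case oplus j => exact ⟨fun h => prevBot_ne_bot j (h.1.trans h.2.symm), rfl⟩
    case otimes j => exact ⟨fun h => prevTop_ne_top j (h.1.trans h.2.symm), rfl⟩
    case odot j => simp [connectorW, hne (isConnector_gadgetStart j)]
    case odot' j => simp [connectorW, hne (isConnector_gadgetStart' j)]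
    case ominus0 i => simp [connectorW, hne (s := .t0 i 0) rfl]
    case ominus1 i => simp [connectorW, hne (s := .t1 i 0) rfl]
    case ominus0' i => simp [connectorW, hne (s := .t0' i 0) rfl]
    case ominus1' i => simp [connectorW, hne (s := .t1' i 0) rfl]
    all_goals cases he
  · obtain ⟨hs, hs', -⟩ := GadgetEdge.flip ⟨h, he⟩
    have hW : connectorW c e = false := by cases e <;> first | rfl | cases he
    simp [hW, hne hs, hne hs']

def shiftSupport (sh : BState m → Bool) (s : BState m) : Bool :=
  !s.isConnector && (sh s.gadget ^^ s.parity)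

theorem isSwapLabelling_shiftSupport (sh : BState m → Bool) :
    IsSwapLabelling (BEdge c0 c1 c2) (shiftSupport sh)
      (extendLabelling (shiftSupport sh) fun _ => true) := by
  refine isSwapLabelling_extendLabelling (fun s hs => by simp [shiftSupport, hs]) ?_
  intro s e s' h
  obtain ⟨hs, hs', hg, hp⟩ := h.flip
  simp only [shiftSupport, hs, hs', hg, hp]
  cases sh s.gadget <;> cases s.parity <;> exact ⟨rfl, rfl⟩

def wZeroSupport : BState m → Bool
  | .g _ j | .f _ j => decide (j.val ∈ [0, 3])
  | s => s.parity

def wZeroW : BEvent m → Bool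
  | .w _ => false
  | _ => true

theorem isSwapLabelling_wZeroSupport :
    IsSwapLabelling (BEdge c0 c1 c2) wZeroSupport (extendLabelling wZeroSupport wZeroW) := by
  refine isSwapLabelling_extendLabelling (fun s hs => by cases s <;> first | rfl | cases hs) ?_
  rintro s e s' ⟨h, he⟩
  cases h <;> cases he <;> exact ⟨rfl, rfl⟩

open Classical in
/-- On `T'_{i,0}` both `k₁`-edges are inert, and so is the `X'`-edge of the model's variable of
clause `i`; this leaves an even number of swaps between them. -/
noncomputable def k1ZeroSupport (c0 c1 : Fin m → Fin m) (M : Set (Fin m)) : BState m → Bool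
  | .g _ j | .f' _ j => decide (j.val ∈ [0, 2])
  | .f _ j | .g' _ j => decide (j.val ∈ [1, 4])
  | .t0' i j => decide (j.val ∈
      if c0 i ∈ M then [2, 5, 7, 9] else if c1 i ∈ M then [2, 4, 7, 9] else [2, 4, 6, 9])
  | .t1' i j => decide (j.val ∈
      if c0 i ∈ M then [2] else if c1 i ∈ M then [1, 3] else [1])
  | s => s.parity

open Classical in
noncomputable def k1ZeroW (M : Set (Fin m)) : BEvent m → Bool
  | .k1 => false
  | .X' x => decide (x ∉ M)
  | _ => true

theorem isSwapLabelling_k1ZeroSupport {M : Set (Fin m)} (hM : OneInThreeModel c0 c1 c2 M) :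
    IsSwapLabelling (BEdge c0 c1 c2) (k1ZeroSupport c0 c1 M)
      (extendLabelling (k1ZeroSupport c0 c1 M) (k1ZeroW M)) := by
  refine isSwapLabelling_extendLabelling (fun s hs => by cases s <;> first | rfl | cases hs) ?_
  rintro s e s' ⟨h, he⟩
  cases h <;> cases he <;> first
    | exact ⟨rfl, rfl⟩
    | rename_i i
      rcases hM i with ⟨h0, h1, h2⟩ | ⟨h0, h1, h2⟩ | ⟨h0, h1, h2⟩ <;>
        simp [k1ZeroSupport, k1ZeroW, h0, h1, h2]

theorem vIdx_mod (i : Fin m) (j : Fin 7) : (vIdx i j).val % 7 = j.val := by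
  simp [vIdx]

/-- The support on `T_{i,0}` when its `v_{7i+p}`-edge is inert (none for `p = 6`). -/
def vZeroT0 : Fin 7 → List ℕ :=
  ![[0, 3, 5, 7, 9, 11], [1, 4, 6, 8, 10], [1, 3, 6, 8, 10], [1, 3, 5, 8, 10], [1, 3, 5, 7, 10],
    [0, 2, 4, 6, 8, 11], [1, 3, 5, 7, 9, 11]]

def vZeroT1 (p : Fin 7) : List ℕ :=
  if p = 6 then [0, 3] else [1, 3]

/-- The events `v_i` with `i ≡ p [MOD 7]` are inert; each gadget `T_{i,0}`, `T_{i,1}` carries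
at most one of them. -/
def vZeroSupport (p : Fin 7) : BState m → Bool
  | .g i j | .f i j => if i.val % 7 = p.val then decide (j.val ∈ [2, 4]) else j.val % 2 == 1
  | .t0 _ j => decide (j.val ∈ vZeroT0 p)
  | .t1 _ j => decide (j.val ∈ vZeroT1 p)
  | s => s.parity

def vZeroW (p : Fin 7) : BEvent m → Bool
  | .v i => i.val % 7 != p.val
  | _ => true

theorem isSwapLabelling_vZeroSupport (p : Fin 7) :
    IsSwapLabelling (BEdge c0 c1 c2) (vZeroSupport p)
      (extendLabelling (vZeroSupport p) (vZeroW p)) := by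
  refine isSwapLabelling_extendLabelling (fun s hs => by cases s <;> first | rfl | cases hs) ?_
  rintro s e s' ⟨h, he⟩
  fin_cases p <;> cases h <;> cases he <;> first
    | exact ⟨rfl, rfl⟩
    | simp only [vZeroSupport, vZeroW, vIdx_mod]; split_ifs <;> simp_all
    | simp [vZeroSupport, vZeroW, vIdx_mod, vZeroT0, vZeroT1]

theorem swapSeparable_of_isConnector {s t : BState m} (hs : s.isConnector) (hst : s ≠ t) :
    SwapSeparable (BEdge c0 c1 c2) s t :=
  ⟨_, _, isSwapLabelling_connectorIndicator hs, by simpa using hst.symm⟩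

theorem swapSeparable_of_gadget_ne {s t : BState m} (hs : s.isConnector = false)
    (ht : t.isConnector = false) (h : s.gadget ≠ t.gadget) :
    SwapSeparable (BEdge c0 c1 c2) s t :=
  ⟨_, _, isSwapLabelling_shiftSupport fun x => if x = s.gadget then !s.parity else t.parity,
    by simp [shiftSupport, hs, ht, Ne.symm h]⟩

theorem swapSeparable_g {M : Set (Fin m)} (hM : OneInThreeModel c0 c1 c2 M) (i : Fin (7 * m))
    {j j' : Fin 5} (h : j ≠ j') : SwapSeparable (BEdge c0 c1 c2) (.g i j) (.g i j') := by
  have : ∀ j j' : Fin 5, j ≠ j' → (j.val % 2 == 1) ≠ (j'.val % 2 == 1) ∨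
      decide (j.val ∈ [0, 3]) ≠ decide (j'.val ∈ [0, 3]) ∨
      decide (j.val ∈ [0, 2]) ≠ decide (j'.val ∈ [0, 2]) := by decide
  rcases this j j' h with h | h | h
  · exact ⟨_, _, isSwapLabelling_shiftSupport fun _ => false,
      by simpa [shiftSupport, BState.isConnector, BState.parity] using h⟩
  · exact ⟨_, _, isSwapLabelling_wZeroSupport, h⟩
  · exact ⟨_, _, isSwapLabelling_k1ZeroSupport hM, h⟩

theorem swapSeparable_f {M : Set (Fin m)} (hM : OneInThreeModel c0 c1 c2 M) (i : Fin (7 * m))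
    {j j' : Fin 5} (h : j ≠ j') : SwapSeparable (BEdge c0 c1 c2) (.f i j) (.f i j') := by
  have : ∀ j j' : Fin 5, j ≠ j' → (j.val % 2 == 1) ≠ (j'.val % 2 == 1) ∨
      decide (j.val ∈ [0, 3]) ≠ decide (j'.val ∈ [0, 3]) ∨
      decide (j.val ∈ [1, 4]) ≠ decide (j'.val ∈ [1, 4]) := by decide
  rcases this j j' h with h | h | h
  · exact ⟨_, _, isSwapLabelling_shiftSupport fun _ => false,
      by simpa [shiftSupport, BState.isConnector, BState.parity] using h⟩
  · exact ⟨_, _, isSwapLabelling_wZeroSupport, h⟩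
  · exact ⟨_, _, isSwapLabelling_k1ZeroSupport hM, h⟩

theorem swapSeparable_t0 (i : Fin m) {j j' : Fin 12} (h : j ≠ j') :
    SwapSeparable (BEdge c0 c1 c2) (.t0 i j) (.t0 i j') := by
  have : ∀ j j' : Fin 12, j ≠ j' → ∃ p : Fin 7,
      decide (j.val ∈ vZeroT0 p) ≠ decide (j'.val ∈ vZeroT0 p) := by decide
  obtain ⟨p, hp⟩ := this j j' h
  exact ⟨_, _, isSwapLabelling_vZeroSupport p, hp⟩

theorem swapSeparable_t1 (i : Fin m) {j j' : Fin 4} (h : j ≠ j') :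
    SwapSeparable (BEdge c0 c1 c2) (.t1 i j) (.t1 i j') := by
  have : ∀ j j' : Fin 4, j ≠ j' → ∃ p : Fin 7,
      decide (j.val ∈ vZeroT1 p) ≠ decide (j'.val ∈ vZeroT1 p) := by decide
  obtain ⟨p, hp⟩ := this j j' h
  exact ⟨_, _, isSwapLabelling_vZeroSupport p, hp⟩

theorem swapSeparable_of_gadget_eq {M : Set (Fin m)} (hM : OneInThreeModel c0 c1 c2 M)
    {s t : BState m} (hs : s.isConnector = false) (hst : s ≠ t) (h : s.gadget = t.gadget) :
    SwapSeparable (BEdge c0 c1 c2) s t := by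
  cases s <;> cases t <;>
    simp only [BState.isConnector, BState.gadget, Bool.true_eq_false, reduceCtorEq, and_true,
      BState.g.injEq, BState.f.injEq, BState.g'.injEq, BState.f'.injEq, BState.t0.injEq,
      BState.t1.injEq, BState.t0'.injEq, BState.t1'.injEq] at hs h
  all_goals
    subst h
    simp only [ne_eq, true_and, BState.g.injEq, BState.f.injEq, BState.g'.injEq, BState.f'.injEq,
      BState.t0.injEq, BState.t1.injEq, BState.t0'.injEq, BState.t1'.injEq] at hst
    first
    | exact swapSeparable_g hM _ hst
    | exact swapSeparable_f hM _ hst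
    | exact swapSeparable_t0 _ hst
    | exact swapSeparable_t1 _ hst
    | exact SwapSeparable.of_swapPrime (swapSeparable_g hM _ hst)
    | exact SwapSeparable.of_swapPrime (swapSeparable_f hM _ hst)
    | exact SwapSeparable.of_swapPrime (swapSeparable_t0 _ hst)
    | exact SwapSeparable.of_swapPrime (swapSeparable_t1 _ hst)

end Aphi

theorem model_implies_Aphi_bidirected_ssp_general
    {m : ℕ} (c0 c1 c2 : Fin m → Fin m)
    (τ : Set Interaction)
    (hswap : Interaction.swap ∈ τ) (hsave : (τ ∩ saveSet).Nonempty)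
    (M : Set (Fin m)) (hM : OneInThreeModel c0 c1 c2 M) :
    HasSSP (BEdge c0 c1 c2) τ := by
  refine hasSSP_of_swapSeparable hswap hsave fun s t hst => ?_
  cases hs : s.isConnector
  · cases ht : t.isConnector
    · by_cases h : s.gadget = t.gadget
      · exact swapSeparable_of_gadget_eq hM hs hst h
      · exact swapSeparable_of_gadget_ne hs ht h
    · exact (swapSeparable_of_isConnector ht hst.symm).symm
  · exact swapSeparable_of_isConnector hs hst

/-- for a `nop`-free type `τ` with `swap ∈ τ` and
`τ ∩ save ≠ ∅`, and an instance `φ` of cubic monotone 1-in-3 3SAT, if `φ` has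
a one-in-three model, then the bi-directed TS `A_φ` has the `τ`-SSP. -/
theorem model_implies_Aphi_bidirected_ssp
    {m : ℕ} (c0 c1 c2 : Fin m → Fin m) (hcubic : CubicMonotone c0 c1 c2)
    (τ : Set Interaction) (hnf : Interaction.nop ∉ τ)
    (hswap : Interaction.swap ∈ τ) (hsave : (τ ∩ saveSet).Nonempty)
    (M : Set (Fin m)) (hM : OneInThreeModel c0 c1 c2 M) :
    HasSSP (BEdge c0 c1 c2) τ :=
  model_implies_Aphi_bidirected_ssp_general c0 c1 c2 τ hswap hsave M hM
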